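/- Decomposition of subcapturing: if Γ ⊢ C₁ <: C₂ then for every x ∈ C₁, Γ ⊢ {x} <: C₂. -/

import Mathlib

/-- The subcapturing relation `Γ ⊢ C₁ <: C₂` over finite sets of variables,
relative to a typing context `Γ` assigning declared capture sets. -/
inductive Subcapt (Γ : ℕ → Option (Finset ℕ)) : Finset ℕ → Finset ℕ → Prop where
  | sc_trans {C₁ C C₂ : Finset ℕ} :
      Subcapt Γ C₁ C → Subcapt Γ C C₂ → Subcapt Γ C₁ C₂
  | sc_elem {x : ℕ} {C : Finset ℕ} :
      x ∈ C → Subcapt Γ {x} C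
  | sc_set {C₁ C₂ : Finset ℕ} :
      (∀ x ∈ C₁, Subcapt Γ {x} C₂) → Subcapt Γ C₁ C₂
  | sc_var {x : ℕ} {C : Finset ℕ} :
      Γ x = some C → Subcapt Γ {x} C

theorem subcapt_decompose (Γ : ℕ → Option (Finset ℕ)) {C₁ C₂ : Finset ℕ}
    (h : Subcapt Γ C₁ C₂) : ∀ x ∈ C₁, Subcapt Γ {x} C₂ := by
  induction h with
  | sc_trans _ h₂ ih₁ _ => exact fun x hx => .sc_trans (ih₁ x hx) h₂
  | sc_elem hmem => exact fun x hx => Finset.mem_singleton.1 hx ▸ .sc_elem hmem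
  | sc_set h _ => exact h
  | sc_var hΓ => exact fun x hx => Finset.mem_singleton.1 hx ▸ .sc_var hΓ
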